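/- arXiv:1805.03890 — 3 statements merged into one kernel-verified Lean document; each statement's English description precedes it below -/
import Mathlib

section
/- Let 0 < σ̲ ≤ σ̄ and define ρ(t,x) = (√2/((σ̄+σ̲)√(πt)))·[exp(−x²/(2σ̄²t)) for x ≤ 0, exp(−x²/(2σ̲²t)) for x > 0], and u(t,x) = ∫_{−∞}^x ρ(t,y) dy for t > 0. Then for all t > 0 and x ≠ 0, u satisfies the nonlinear heat equation ∂_t u(t,x) = G(∂²_{xx} u(t,x)), where G(a) = ½(σ̄² a⁺ − σ̲² a⁻). -/
/-!
On each half-line, `ρ(t, ·)` is a constant multiple of the centred Gaussian kernel of variance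
`σ²t` (`σ = σ̄` for `x ≤ 0`, `σ = σ̲` for `x > 0`), which solves the linear heat equation
`∂_t = (σ²/2) ∂²_xx`. The substitution `y = σ√t z` turns `∫_{-∞}^x` of that kernel into
`σ Φ(x / (σ√t))` with `Φ(w) = ∫_{-∞}^w exp(-z²/2) dz`, which makes its `t`-derivative
explicit; for `x > 0` the contribution of the left half-line is independent of `t`. Hence `u`
solves the linear equation away from `0`, and since `∂²_xx u = ∂_x ρ` has the sign of `-x`,
`G` selects `σ̄` for `x < 0` and `σ̲` for `x > 0`.
-/

open Real MeasureTheory Set Filter Topology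

/-- The centred Gaussian density of variance `σ²t`, without its factor `1 / (σ √(2π))`. -/
noncomputable def gaussKernel (σ t y : ℝ) : ℝ := exp (-y ^ 2 / (2 * σ ^ 2 * t)) / √t

lemma integrable_exp_neg_sq_div {c : ℝ} (hc : 0 < c) :
    Integrable fun y : ℝ => exp (-y ^ 2 / c) := by
  simpa only [neg_mul, ← div_eq_inv_mul, neg_div] using
    integrable_exp_neg_mul_sq (inv_pos.2 hc)

lemma hasDerivAt_integral_Iic {E : Type*} [NormedAddCommGroup E] [NormedSpace ℝ E]
    [CompleteSpace E] {f : ℝ → E} {x : ℝ} (hf : Integrable f) (hx : ContinuousAt f x) :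
    HasDerivAt (fun b => ∫ y in Iic b, f y) (f x) x := by
  have hsplit : (fun b => ∫ y in Iic b, f y)
      = fun b => (∫ y in Iic x, f y) + ∫ y in x..b, f y := by
    funext b
    rw [← intervalIntegral.integral_Iic_sub_Iic hf.integrableOn hf.integrableOn]
    abel
  rw [hsplit]
  exact (intervalIntegral.integral_hasDerivAt_right hf.intervalIntegrable
    hf.aestronglyMeasurable.stronglyMeasurableAtFilter hx).const_add _

lemma integral_Iic_comp_div {E : Type*} [NormedAddCommGroup E] [NormedSpace ℝ E]
    (f : ℝ → E) {a : ℝ} (ha : 0 < a) (x : ℝ) :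
    ∫ y in Iic x, f (y / a) = a • ∫ z in Iic (x / a), f z := by
  have hind : (fun z => (Iic x).indicator (fun y => f (y / a)) (a * z))
      = (Iic (x / a)).indicator f := by
    funext z
    simp only [indicator, mem_Iic, le_div_iff₀ ha, mul_comm z a, mul_div_cancel_left₀ _ ha.ne']
  rw [← integral_indicator measurableSet_Iic, ← integral_indicator measurableSet_Iic,
    ← hind, Measure.integral_comp_mul_left, abs_of_pos (inv_pos.2 ha), smul_smul,
    mul_inv_cancel₀ ha.ne', one_smul]

lemma integral_Iic_gaussKernel {σ t : ℝ} (hσ : 0 < σ) (ht : 0 < t) (x : ℝ) :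
    ∫ y in Iic x, gaussKernel σ t y = σ * ∫ z in Iic (x / (σ * √t)), exp (-z ^ 2 / 2) := by
  have hst : 0 < √t := sqrt_pos.2 ht
  have hscale : ∀ y, gaussKernel σ t y = (√t)⁻¹ * exp (-(y / (σ * √t)) ^ 2 / 2) := by
    intro y
    rw [gaussKernel, div_pow, mul_pow, sq_sqrt ht.le]
    field_simp
  have hsub := integral_Iic_comp_div (fun z => exp (-z ^ 2 / 2)) (by positivity : 0 < σ * √t) x
  beta_reduce at hsub
  simp_rw [hscale]
  rw [integral_const_mul, hsub, smul_eq_mul]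
  field_simp

lemma hasDerivAt_gaussKernel (σ t y : ℝ) :
    HasDerivAt (gaussKernel σ t) (-(y / (σ ^ 2 * t)) * gaussKernel σ t y) y := by
  have hexponent : HasDerivAt (fun y : ℝ => -y ^ 2 / (2 * σ ^ 2 * t))
      (-(2 * y) / (2 * σ ^ 2 * t)) y := by
    simpa using (hasDerivAt_pow 2 y).neg.div_const (2 * σ ^ 2 * t)
  unfold gaussKernel
  exact (hexponent.exp.div_const √t).congr_deriv (by ring)

lemma hasDerivAt_integral_Iic_gaussKernel_time {σ t : ℝ} (hσ : 0 < σ) (ht : 0 < t) (y : ℝ) :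
    HasDerivAt (fun s => ∫ z in Iic y, gaussKernel σ s z)
      (σ ^ 2 / 2 * (-(y / (σ ^ 2 * t)) * gaussKernel σ t y)) t := by
  have hst : 0 < √t := sqrt_pos.2 ht
  have hΦ : HasDerivAt (fun w => ∫ z in Iic w, exp (-z ^ 2 / 2))
      (exp (-(y / (σ * √t)) ^ 2 / 2)) (y / (σ * √t)) :=
    hasDerivAt_integral_Iic (integrable_exp_neg_sq_div two_pos) (by fun_prop)
  have hscale : HasDerivAt (fun s => y / (σ * √s))
      ((0 * (σ * √t) - y * (σ * (1 / (2 * √t)))) / (σ * √t) ^ 2) t :=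
    (hasDerivAt_const t y).div ((hasDerivAt_sqrt ht.ne').const_mul σ) (by positivity)
  have heq : (fun s => ∫ z in Iic y, gaussKernel σ s z)
      =ᶠ[𝓝 t] fun s => σ * ∫ z in Iic (y / (σ * √s)), exp (-z ^ 2 / 2) := by
    filter_upwards [Ioi_mem_nhds ht] with s hs
    exact integral_Iic_gaussKernel hσ hs y
  refine ((hΦ.comp t hscale).const_mul σ).congr_of_eventuallyEq heq |>.congr_deriv ?_
  rw [gaussKernel, div_pow, mul_pow, sq_sqrt ht.le]
  field_simp
  rw [sq_sqrt ht.le]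
  ring

lemma gaussKernel_pos (σ : ℝ) {t : ℝ} (ht : 0 < t) (y : ℝ) : 0 < gaussKernel σ t y := by
  unfold gaussKernel; positivity

lemma integrable_gaussKernel {σ t : ℝ} (hσ : σ ≠ 0) (ht : 0 < t) :
    Integrable (gaussKernel σ t) :=
  (integrable_exp_neg_sq_div (by positivity)).div_const _

lemma continuous_gaussKernel (σ t : ℝ) : Continuous (gaussKernel σ t) := by
  unfold gaussKernel; fun_prop

lemma deriv_time_eq_of_eq_integral_Iic_gaussKernel {u : ℝ → ℝ → ℝ} {σ c A t x : ℝ}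
    (hσ : 0 < σ) (ht : 0 < t) (hu : ∀ s > 0, u s x = c * (A + ∫ z in Iic x, gaussKernel σ s z)) :
    deriv (fun s => u s x) t = c * (σ ^ 2 / 2 * (-(x / (σ ^ 2 * t)) * gaussKernel σ t x)) := by
  have heq : (fun s => u s x)
      =ᶠ[𝓝 t] fun s => c * (A + ∫ z in Iic x, gaussKernel σ s z) := by
    filter_upwards [Ioi_mem_nhds ht] with s hs
    exact hu s hs
  exact heq.deriv_eq.trans ((hasDerivAt_integral_Iic_gaussKernel_time hσ ht x).const_add A
    |>.const_mul c).deriv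

lemma deriv_deriv_eq_of_eq_integral_Iic_gaussKernel {v : ℝ → ℝ} {σ c A t x : ℝ} {S : Set ℝ}
    (hσ : 0 < σ) (ht : 0 < t) (hS : S ∈ 𝓝 x)
    (hv : ∀ y ∈ S, v y = c * (A + ∫ z in Iic y, gaussKernel σ t z)) :
    deriv (fun y => deriv v y) x = c * (-(x / (σ ^ 2 * t)) * gaussKernel σ t x) := by
  have hderiv : (fun y => deriv v y) =ᶠ[𝓝 x] fun y => c * gaussKernel σ t y := by
    filter_upwards [eventually_eventually_nhds.2 hS] with y hy
    have hvy : v =ᶠ[𝓝 y] fun y => c * (A + ∫ z in Iic y, gaussKernel σ t z) := hy.mono hv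
    exact hvy.deriv_eq.trans (((hasDerivAt_integral_Iic (integrable_gaussKernel hσ.ne' ht)
      (continuous_gaussKernel σ t).continuousAt).const_add A).const_mul c).deriv
  exact hderiv.deriv_eq.trans ((hasDerivAt_gaussKernel σ t x).const_mul c).deriv

section Piecewise

variable {E : Type*} [NormedAddCommGroup E] [NormedSpace ℝ E] {f g : ℝ → E} {a x : ℝ}

lemma setIntegral_Iic_ite_of_le (hx : x ≤ a) :
    ∫ y in Iic x, (if y ≤ a then f y else g y) = ∫ y in Iic x, f y :=
  setIntegral_congr_fun measurableSet_Iic fun _ hy => if_pos (le_trans hy hx)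

lemma setIntegral_Iic_ite_of_ge (hf : IntegrableOn f (Iic a)) (hg : Integrable g) (hx : a ≤ x) :
    ∫ y in Iic x, (if y ≤ a then f y else g y)
      = (∫ y in Iic a, f y) + ((∫ y in Iic x, g y) - ∫ y in Iic a, g y) := by
  have hleft : IntegrableOn (fun y => if y ≤ a then f y else g y) (Iic a) :=
    hf.congr_fun (fun _ hy => (if_pos hy).symm) measurableSet_Iic
  have hright : IntegrableOn (fun y => if y ≤ a then f y else g y) (Ioc a x) :=
    hg.integrableOn.congr_fun (fun _ hy => (if_neg (not_le.2 hy.1)).symm) measurableSet_Ioc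
  have hsplit := setIntegral_union (Iic_disjoint_Ioc le_rfl) measurableSet_Ioc hleft hright
  rw [Iic_union_Ioc_eq_Iic hx] at hsplit
  rw [hsplit, setIntegral_Iic_ite_of_le le_rfl,
    setIntegral_congr_fun measurableSet_Ioc fun _ hy => if_neg (not_le.2 hy.1),
    ← intervalIntegral.integral_of_le hx,
    intervalIntegral.integral_Iic_sub_Iic hg.integrableOn hg.integrableOn]

end Piecewise

theorem stmt_7 (σl σu : ℝ) (hl : 0 < σl) (hle : σl ≤ σu)
    (ρ : ℝ → ℝ → ℝ)
    (hρ : ∀ t x, ρ t x = (Real.sqrt 2 / ((σu + σl) * Real.sqrt (Real.pi * t))) *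
      (if x ≤ 0 then Real.exp (-x ^ 2 / (2 * σu ^ 2 * t))
       else Real.exp (-x ^ 2 / (2 * σl ^ 2 * t))))
    (u : ℝ → ℝ → ℝ)
    (hu : ∀ t x, u t x = ∫ y in Set.Iic x, ρ t y)
    (G : ℝ → ℝ)
    (hG : ∀ a, G a = (σu ^ 2 * max a 0 - σl ^ 2 * max (-a) 0) / 2) :
    ∀ t > 0, ∀ x : ℝ, x ≠ 0 →
      deriv (fun s => u s x) t = G (deriv (fun y => deriv (fun z => u t z) y) x) := by
  intro t ht x hx
  have hσu : 0 < σu := hl.trans_le hle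
  set c := √2 / ((σu + σl) * √π)
  have hc : 0 < c := by positivity
  have hu' : ∀ s > 0, ∀ y, u s y
      = c * ∫ z in Iic y, (if z ≤ 0 then gaussKernel σu s z else gaussKernel σl s z) := by
    intro s hs y
    rw [hu, ← integral_const_mul]
    refine integral_congr_ae (ae_of_all _ fun z => ?_)
    dsimp only
    rw [hρ, sqrt_mul pi_pos.le]
    split_ifs <;> (simp only [c, gaussKernel]; field_simp)
  rcases hx.lt_or_gt with hneg | hpos
  · have hrep : ∀ s > 0, ∀ y ∈ Iio (0 : ℝ), u s y
        = c * (0 + ∫ z in Iic y, gaussKernel σu s z) :=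
      fun s hs y hy => by rw [hu' s hs, zero_add, setIntegral_Iic_ite_of_le (le_of_lt hy)]
    have hk : 0 ≤ c * (-(x / (σu ^ 2 * t)) * gaussKernel σu t x) :=
      mul_nonneg hc.le (mul_nonneg (neg_nonneg.2 (div_neg_of_neg_of_pos hneg (by positivity)).le)
        (gaussKernel_pos σu ht x).le)
    rw [deriv_time_eq_of_eq_integral_Iic_gaussKernel hσu ht (fun s hs => hrep s hs x hneg),
      deriv_deriv_eq_of_eq_integral_Iic_gaussKernel hσu ht (Iio_mem_nhds hneg) (hrep t ht), hG,
      max_eq_left hk, max_eq_right (neg_nonpos.2 hk)]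
    ring
  · have hrep : ∀ s > 0, ∀ y ∈ Ioi (0 : ℝ), u s y
        = c * ((σu - σl) * (∫ z in Iic 0, exp (-z ^ 2 / 2))
          + ∫ z in Iic y, gaussKernel σl s z) := by
      intro s hs y hy
      rw [hu' s hs, setIntegral_Iic_ite_of_ge (integrable_gaussKernel hσu.ne' hs).integrableOn
        (integrable_gaussKernel hl.ne' hs) (le_of_lt hy), integral_Iic_gaussKernel hσu hs 0,
        integral_Iic_gaussKernel hl hs 0, zero_div, zero_div]
      ring
    have hk : c * (-(x / (σl ^ 2 * t)) * gaussKernel σl t x) ≤ 0 :=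
      mul_nonpos_of_nonneg_of_nonpos hc.le (mul_nonpos_of_nonpos_of_nonneg
        (neg_nonpos.2 (by positivity)) (gaussKernel_pos σl ht x).le)
    rw [deriv_time_eq_of_eq_integral_Iic_gaussKernel hl ht (fun s hs => hrep s hs x hpos),
      deriv_deriv_eq_of_eq_integral_Iic_gaussKernel hl ht (Ioi_mem_nhds hpos) (hrep t ht), hG,
      max_eq_right hk, max_eq_left (neg_nonneg.2 hk)]
    ring
end

section
/- Let 0 < σ̲ ≤ σ̄, F̂ the worst-case G-normal CDF with parameters (σ̲, σ̄), and α ∈ (0, σ̄/(σ̄+σ̲)]. Then the G-VaR at level α admits the closed form G-VaR_α = −F̂⁻¹(α) = −σ̄·Φ⁻¹(α(σ̄+σ̲)/(2σ̄)), where Φ⁻¹ is the standard normal quantile function. In particular, for α ≤ σ̄/(σ̄+σ̲), G-VaR_α ≥ 0. -/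
open Real Set MeasureTheory

private noncomputable def gpdf (t : ℝ) : ℝ := (1 / Real.sqrt (2 * Real.pi)) * Real.exp (-t ^ 2 / 2)

private lemma gpdf_integrable : Integrable gpdf := by
  have h : Integrable (fun t : ℝ => Real.exp (-(1/2 : ℝ) * t ^ 2)) :=
    integrable_exp_neg_mul_sq (by norm_num)
  refine (h.const_mul (1 / Real.sqrt (2 * Real.pi))).congr ?_
  filter_upwards with t
  unfold gpdf
  ring_nf

private lemma gpdf_pos (t : ℝ) : 0 < gpdf t := by
  unfold gpdf
  positivity

private noncomputable def Phi (x : ℝ) : ℝ := ∫ t in Set.Iic x, gpdf t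

private lemma Phi_strictMono : StrictMono Phi := by
  intro a b hab
  have key : Phi b - Phi a = ∫ t in a..b, gpdf t :=
    intervalIntegral.integral_Iic_sub_Iic gpdf_integrable.integrableOn gpdf_integrable.integrableOn
  have hpos : 0 < ∫ t in a..b, gpdf t :=
    intervalIntegral.intervalIntegral_pos_of_pos gpdf_integrable.intervalIntegrable gpdf_pos hab
  have : Phi a < Phi b := by linarith
  exact this

private lemma Phi_zero : Phi 0 = 1 / 2 := by
  have hsym : (∫ t in Iic (0:ℝ), gpdf t) = ∫ t in Ioi (0:ℝ), gpdf t := by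
    have h := integral_comp_neg_Iic (0:ℝ) gpdf
    rw [neg_zero] at h
    rw [← h]
    congr 1
    funext t
    unfold gpdf
    rw [neg_pow]
    norm_num
  have htot : (∫ t in Iic (0:ℝ), gpdf t) + (∫ t in Ioi (0:ℝ), gpdf t) = ∫ t, gpdf t :=
    intervalIntegral.integral_Iic_add_Ioi gpdf_integrable.integrableOn gpdf_integrable.integrableOn
  have hval : (∫ t, gpdf t) = 1 := by
    have h1 : (∫ t : ℝ, Real.exp (-(1/2:ℝ) * t ^ 2)) = Real.sqrt (Real.pi / (1/2)) :=
      integral_gaussian (1/2 : ℝ)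
    have h2 : (∫ t, gpdf t) = (1 / Real.sqrt (2 * Real.pi)) * ∫ t : ℝ, Real.exp (-(1/2:ℝ) * t ^ 2) := by
      rw [← integral_const_mul]
      congr 1; funext t; unfold gpdf; ring_nf
    rw [h2, h1, show Real.pi / (1/2) = 2 * Real.pi by ring, one_div, inv_mul_cancel₀]
    positivity
  unfold Phi
  linarith

theorem stmt_10 (σl σu : ℝ) (hl : 0 < σl) (hle : σl ≤ σu)
    (Φ : ℝ → ℝ)
    (hΦ : ∀ x, Φ x = ∫ t in Set.Iic x, (1 / Real.sqrt (2 * Real.pi)) * Real.exp (-t ^ 2 / 2))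
    (Φinv : ℝ → ℝ)
    (hΦinv : ∀ p, 0 < p → p < 1 → Φ (Φinv p) = p)
    (hΦinv' : ∀ x, Φinv (Φ x) = x)
    (Fhat : ℝ → ℝ)
    (hF : ∀ x, Fhat x = if x ≤ 0 then (2 * σu / (σu + σl)) * Φ (x / σu)
      else 1 - (2 * σl / (σu + σl)) * Φ (-x / σl))
    (α : ℝ) (hα0 : 0 < α) (hα : α ≤ σu / (σu + σl)) :
    -sInf {x : ℝ | Fhat x > α} = -(σu * Φinv (α * (σu + σl) / (2 * σu))) ∧
    0 ≤ -(σu * Φinv (α * (σu + σl) / (2 * σu))) := by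
  have hΦP : Φ = Phi := by funext x; rw [hΦ x]; rfl
  subst hΦP
  have hσu : 0 < σu := lt_of_lt_of_le hl hle
  have hsum : 0 < σu + σl := by linarith
  set p := α * (σu + σl) / (2 * σu) with hpdef
  have hp0 : 0 < p := by positivity
  have hp12 : p ≤ 1 / 2 := by
    rw [hpdef, div_le_div_iff₀ (by positivity) (by norm_num)]
    have h1 : α * (σu + σl) ≤ (σu / (σu + σl)) * (σu + σl) :=
      mul_le_mul_of_nonneg_right hα (le_of_lt hsum)
    rw [div_mul_cancel₀ σu (ne_of_gt hsum)] at h1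
    linarith
  have hp1 : p < 1 := by linarith
  have hPhip : Phi (Φinv p) = p := hΦinv p hp0 hp1
  have hinv_le : Φinv p ≤ 0 := by
    by_contra h
    push_neg at h
    have := Phi_strictMono h
    rw [Phi_zero, hPhip] at this
    linarith
  set x₀ := σu * Φinv p with hx0def
  have hx0 : x₀ ≤ 0 := mul_nonpos_of_nonneg_of_nonpos (le_of_lt hσu) hinv_le
  have hx0div : x₀ / σu = Φinv p := by
    rw [hx0def, mul_div_cancel_left₀ _ (ne_of_gt hσu)]
  have hc : 0 < 2 * σu / (σu + σl) := by positivity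
  have hαeq : (2 * σu / (σu + σl)) * p = α := by
    rw [hpdef]; field_simp
  have hmem : ∀ x, x₀ < x → Fhat x > α := by
    intro x hx
    rcases le_or_gt x 0 with hxle | hxgt
    · rw [hF x, if_pos hxle]
      have h1 : Phi (x₀ / σu) < Phi (x / σu) :=
        Phi_strictMono ((div_lt_div_iff_of_pos_right hσu).mpr hx)
      rw [hx0div, hPhip] at h1
      calc α = (2 * σu / (σu + σl)) * p := hαeq.symm
        _ < (2 * σu / (σu + σl)) * Phi (x / σu) := by
            exact mul_lt_mul_of_pos_left h1 hc
    · rw [hF x, if_neg (not_le.mpr hxgt)]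
      have h1 : Phi (-x / σl) < Phi 0 :=
        Phi_strictMono (by rw [neg_div, neg_lt_zero]; positivity)
      rw [Phi_zero] at h1
      have hcl : (0:ℝ) < 2 * σl / (σu + σl) := by positivity
      have h2 : (2 * σl / (σu + σl)) * Phi (-x / σl) < (2 * σl / (σu + σl)) * (1/2) :=
        mul_lt_mul_of_pos_left h1 hcl
      have h4 : σu / (σu + σl) + σl / (σu + σl) = 1 := by
        field_simp
      have h3 : (2 * σl / (σu + σl)) * (1/2) = σl / (σu + σl) := by ring
      linarith
  have hS : Set.Ioi x₀ ⊆ {x : ℝ | Fhat x > α} := fun x hx => hmem x hx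
  have hlb : ∀ x ∈ {x : ℝ | Fhat x > α}, x₀ ≤ x := by
    intro x hx
    by_contra h
    push_neg at h
    have hxle : x ≤ 0 := le_trans (le_of_lt h) hx0
    have h1 : Phi (x / σu) < Phi (x₀ / σu) :=
      Phi_strictMono ((div_lt_div_iff_of_pos_right hσu).mpr h)
    rw [hx0div, hPhip] at h1
    have h2 : (2 * σu / (σu + σl)) * Phi (x / σu) < (2 * σu / (σu + σl)) * p :=
      mul_lt_mul_of_pos_left h1 hc
    rw [hαeq] at h2
    have hx' : Fhat x > α := hx
    rw [hF x, if_pos hxle] at hx'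
    exact absurd hx' (not_lt.mpr (le_of_lt h2))
  have hne : {x : ℝ | Fhat x > α}.Nonempty := ⟨x₀ + 1, hmem _ (by linarith)⟩
  have hbdd : BddBelow {x : ℝ | Fhat x > α} := ⟨x₀, hlb⟩
  have hinf : sInf {x : ℝ | Fhat x > α} = x₀ := by
    apply le_antisymm
    · calc sInf {x : ℝ | Fhat x > α} ≤ sInf (Set.Ioi x₀) :=
            csInf_le_csInf hbdd (by exact ⟨x₀ + 1, by simp⟩) hS
        _ = x₀ := csInf_Ioi
    · exact le_csInf hne hlb
  exact ⟨by rw [hinf], by linarith⟩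
end

section
/- Fix risk level α ∈ (0, 1/2) and σ̲ > 0. The G-VaR with parameters (σ̲, σ̄), namely G-VaR_α(σ̲,σ̄) = −σ̄·Φ⁻¹(α(σ̄+σ̲)/(2σ̄)) (valid when α ≤ σ̄/(σ̄+σ̲)), is monotonically non-decreasing in σ̄ on [σ̲, ∞). In particular model uncertainty (σ̄ > σ̲) yields a VaR at least as large as the classical normal VaR −σ̲Φ⁻¹(α). -/
/-!
The level `α (σ̄ + σ̲) / (2 σ̄)` at which the quantile is taken decreases in `σ̄` and stays in
`(0, α] ⊆ (0, 1/2)`. Hence `-Φ⁻¹` of it is nonnegative (the normal quantile is negative below the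
median `Φ 0 = 1/2`) and non-decreasing in `σ̄`, and so is its product with the positive,
increasing factor `σ̄`. At `σ̄ = σ̲` the level is `α`, which gives the comparison with the
classical VaR.
-/

open Real Set
open MeasureTheory ProbabilityTheory

lemma monotone_setIntegral_Iic {μ : Measure ℝ} {f : ℝ → ℝ} (hf : Integrable f μ)
    (hf₀ : 0 ≤ f) : Monotone fun x => ∫ t in Iic x, f t ∂μ :=
  fun _ _ hxy => setIntegral_mono_set hf.integrableOn (ae_of_all _ fun t => hf₀ t)
    (Iic_subset_Iic.mpr hxy).eventuallyLE

lemma setIntegral_Iic_zero_of_even {f : ℝ → ℝ} (hf : Integrable f) (heven : ∀ x, f (-x) = f x) :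
    ∫ x in Iic 0, f x = (∫ x, f x) / 2 := by
  have hsymm : ∫ x in Iic 0, f x = ∫ x in Ioi 0, f x := by
    simpa only [heven, neg_zero] using integral_comp_neg_Iic 0 f
  have hsum : (∫ x in Iic 0, f x) + ∫ x in Ioi 0, f x = ∫ x, f x := by
    rw [← setIntegral_union (Iic_disjoint_Ioi le_rfl) measurableSet_Ioi hf.integrableOn
      hf.integrableOn, Iic_union_Ioi, Measure.restrict_univ]
  linarith

lemma Monotone.monotoneOn_of_rightInvOn {α β : Type*} [LinearOrder α] [PartialOrder β]
    {f : α → β} {g : β → α} {s : Set β} (hf : Monotone f) (hfg : RightInvOn g f s) :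
    MonotoneOn g s := by
  intro p hp q hq hpq
  by_contra! hlt
  have hqp : q ≤ p := by simpa only [hfg hp, hfg hq] using hf hlt.le
  exact hlt.ne (congrArg g (le_antisymm hpq hqp)).symm

lemma stdGaussianDensity_eq (t : ℝ) :
    1 / √(2 * π) * exp (-t ^ 2 / 2) = gaussianPDFReal 0 1 t := by
  simp [gaussianPDFReal]

section GVaR

variable {α σl : ℝ}

noncomputable def gVaRLevel (α σl σu : ℝ) : ℝ := α * (σu + σl) / (2 * σu)

lemma gVaRLevel_self (hl : σl ≠ 0) : gVaRLevel α σl σl = α := by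
  unfold gVaRLevel
  field_simp
  ring

lemma gVaRLevel_pos (hα : 0 < α) (hl : 0 < σl) {σu : ℝ} (hσu : σl ≤ σu) :
    0 < gVaRLevel α σl σu := by
  unfold gVaRLevel
  have : 0 < σu := hl.trans_le hσu
  positivity

lemma gVaRLevel_le (hα : 0 ≤ α) (hl : 0 < σl) {σu : ℝ} (hσu : σl ≤ σu) :
    gVaRLevel α σl σu ≤ α := by
  unfold gVaRLevel
  rw [div_le_iff₀ (by linarith)]
  nlinarith

lemma antitoneOn_gVaRLevel (hα : 0 ≤ α) (hl : 0 < σl) :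
    AntitoneOn (gVaRLevel α σl) (Ici σl) := by
  intro a ha b _ hab
  have ha₀ : 0 < a := hl.trans_le ha
  have hb₀ : 0 < b := ha₀.trans_le hab
  unfold gVaRLevel
  rw [div_le_div_iff₀ (by positivity) (by positivity)]
  nlinarith [mul_nonneg (mul_nonneg hα hl.le) (sub_nonneg.mpr hab)]

/-- `G-VaR_α(σ̲, σ̄)`, with `σl = σ̲`, `σu = σ̄` and `Φinv` the standard normal quantile. -/
noncomputable def gVaR (Φinv : ℝ → ℝ) (α σl σu : ℝ) : ℝ := -(σu * Φinv (gVaRLevel α σl σu))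

lemma monotoneOn_gVaR {Φ Φinv : ℝ → ℝ} (hΦ : Monotone Φ) (hΦ0 : Φ 0 = 1 / 2)
    (hΦinv : RightInvOn Φinv Φ (Ioo 0 1)) (hα0 : 0 < α) (hα : α < 1 / 2) (hl : 0 < σl) :
    MonotoneOn (gVaR Φinv α σl) (Ici σl) := by
  have hlevel : MapsTo (gVaRLevel α σl) (Ici σl) (Ioc 0 α) := fun σ hσ =>
    ⟨gVaRLevel_pos hα0 hl hσ, gVaRLevel_le hα0.le hl hσ⟩
  have hΦinv_mono : MonotoneOn Φinv (Ioo 0 1) := hΦ.monotoneOn_of_rightInvOn hΦinv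
  have hsub : Ioc 0 α ⊆ Ioo 0 1 := fun p hp => ⟨hp.1, by linarith [hp.2]⟩
  have hΦinv_nonpos : ∀ p ∈ Ioc 0 α, Φinv p ≤ 0 := fun p hp => by
    refine (hΦ.reflect_lt ?_).le
    rw [hΦinv (hsub hp), hΦ0]
    linarith [hp.2]
  intro a ha b hb hab
  have hquant : Φinv (gVaRLevel α σl b) ≤ Φinv (gVaRLevel α σl a) :=
    hΦinv_mono (hsub (hlevel hb)) (hsub (hlevel ha)) (antitoneOn_gVaRLevel hα0.le hl ha hb hab)
  have ha₀ : 0 ≤ a := hl.le.trans ha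
  unfold gVaR
  rw [← mul_neg, ← mul_neg]
  exact mul_le_mul hab (neg_le_neg hquant) (neg_nonneg.mpr (hΦinv_nonpos _ (hlevel ha)))
    (ha₀.trans hab)

end GVaR

theorem stmt_11_general (α σl : ℝ) (hα0 : 0 < α) (hα : α < 1 / 2) (hl : 0 < σl)
    (Φ : ℝ → ℝ)
    (hΦ : ∀ x, Φ x = ∫ t in Set.Iic x, (1 / Real.sqrt (2 * Real.pi)) * Real.exp (-t ^ 2 / 2))
    (Φinv : ℝ → ℝ)
    (hΦinv : ∀ p, 0 < p → p < 1 → Φ (Φinv p) = p) :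
    MonotoneOn (fun σu => -(σu * Φinv (α * (σu + σl) / (2 * σu)))) (Set.Ici σl) ∧
    ∀ σu : ℝ, σl ≤ σu →
      -(σl * Φinv α) ≤ -(σu * Φinv (α * (σu + σl) / (2 * σu))) := by
  simp only [stdGaussianDensity_eq] at hΦ
  have hΦ_mono : Monotone Φ := by
    simpa only [← funext hΦ] using
      monotone_setIntegral_Iic (integrable_gaussianPDFReal 0 1) (gaussianPDFReal_nonneg 0 1)
  have hΦ0 : Φ 0 = 1 / 2 := by
    rw [hΦ, setIntegral_Iic_zero_of_even (integrable_gaussianPDFReal 0 1)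
      (by simp [gaussianPDFReal]), integral_gaussianPDFReal_eq_one 0 one_ne_zero]
  have hmono : MonotoneOn (gVaR Φinv α σl) (Ici σl) :=
    monotoneOn_gVaR hΦ_mono hΦ0 (fun p hp => hΦinv p hp.1 hp.2) hα0 hα hl
  refine ⟨hmono, fun σu hσu => ?_⟩
  have hcmp := hmono self_mem_Ici hσu hσu
  rwa [gVaR, gVaR, gVaRLevel_self hl.ne'] at hcmp

theorem stmt_11 (α σl : ℝ) (hα0 : 0 < α) (hα : α < 1 / 2) (hl : 0 < σl)
    (Φ : ℝ → ℝ)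
    (hΦ : ∀ x, Φ x = ∫ t in Set.Iic x, (1 / Real.sqrt (2 * Real.pi)) * Real.exp (-t ^ 2 / 2))
    (Φinv : ℝ → ℝ)
    (hΦinv : ∀ p, 0 < p → p < 1 → Φ (Φinv p) = p)
    (hΦinv' : ∀ x, Φinv (Φ x) = x) :
    MonotoneOn (fun σu => -(σu * Φinv (α * (σu + σl) / (2 * σu)))) (Set.Ici σl) ∧
    ∀ σu : ℝ, σl ≤ σu →
      -(σl * Φinv α) ≤ -(σu * Φinv (α * (σu + σl) / (2 * σu))) :=
  stmt_11_general α σl hα0 hα hl Φ hΦ Φinv hΦinv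
end
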